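/- Case T = B_n of the relative Kruskal theorem: for every n ≥ 1, the collection of tuples (U, v_1, ..., v_n) where U is a planar rooted tree and v_1, ..., v_n are distinguished non-root vertices of U that are pairwise incomparable in the tree order and listed in increasing depth-first order, quasi-ordered by (U, v_1,...,v_n) ≤ (U', v_1',...,v_n') iff there exists an order embedding U → U' preserving the root and the depth-first ordering with v_i ↦ v_i' for all i, is a well-quasi-order. -/

import Mathlib

/-- A finite rooted tree, encoded as a finite partial order (the tree order,
with the root as maximum element) in which the set of elements above any
vertex is a chain (the path from the vertex to the root). -/
structure RTree where
  V : Type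
  finite : Finite V
  le : V → V → Prop
  le_refl : ∀ v, le v v
  le_antisymm : ∀ v w, le v w → le w v → v = w
  le_trans : ∀ u v w, le u v → le v w → le u w
  root : V
  le_root : ∀ v, le v root
  up_total : ∀ u v w, le u v → le u w → le v w ∨ le w v

/-- A planar rooted tree: a rooted tree together with its depth-first ordering,
a linear order on the vertices arising from the total orderings of the incoming
edges at each vertex via a clockwise depth-first tree walk.  Such linear orders
are exactly those in which ancestors precede descendants and every principal
downset of the tree order is an interval. -/
structure PRTree extends RTree where
  dfle : V → V → Prop
  dfle_refl : ∀ v, dfle v v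
  dfle_antisymm : ∀ v w, dfle v w → dfle w v → v = w
  dfle_trans : ∀ u v w, dfle u v → dfle v w → dfle u w
  dfle_total : ∀ v w, dfle v w ∨ dfle w v
  dfle_of_le : ∀ v w, le v w → dfle w v
  downset_interval : ∀ u a b c, le a u → le c u → dfle a b → dfle b c → le b u

/-- A morphism in the category `PT`: an order embedding of vertex sets which
preserves the root and the depth-first ordering. -/
structure PTHom (T U : PRTree) where
  toFun : T.V → U.V
  inj : Function.Injective toFun
  map_le : ∀ v w, T.le v w → U.le (toFun v) (toFun w)
  reflect_le : ∀ v w, U.le (toFun v) (toFun w) → T.le v w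
  map_root : toFun T.root = U.root
  map_dfle : ∀ v w, T.dfle v w → U.dfle (toFun v) (toFun w)

def PTHom.id (T : PRTree) : PTHom T T where
  toFun := fun v => v
  inj := fun _ _ h => h
  map_le := fun _ _ h => h
  reflect_le := fun _ _ h => h
  map_root := rfl
  map_dfle := fun _ _ h => h

def PTHom.comp {T U W : PRTree} (g : PTHom U W) (f : PTHom T U) :
    PTHom T W where
  toFun := fun v => g.toFun (f.toFun v)
  inj := fun _ _ h => f.inj (g.inj h)
  map_le := fun v w h => g.map_le _ _ (f.map_le v w h)
  reflect_le := fun v w h => f.reflect_le _ _ (g.reflect_le _ _ h)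
  map_root := by show g.toFun (f.toFun T.root) = W.root; rw [f.map_root, g.map_root]
  map_dfle := fun v w h => g.map_dfle _ _ (f.map_dfle v w h)

noncomputable section RelKruskalAux

namespace RelKruskal

/-! ### Maxima of finite chains -/

lemma finset_max_of_total {α : Type*} (r : α → α → Prop)
    (htrans : ∀ a b c, r a b → r b c → r a c) :
    ∀ (s : Finset α), s.Nonempty → (∀ a ∈ s, ∀ b ∈ s, r a b ∨ r b a) →
      ∃ m ∈ s, ∀ a ∈ s, r a m := by
  classical
  intro s
  induction s using Finset.induction_on with
  | empty => intro h; simp at h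
  | @insert x t hx ih =>
    intro _ htot
    rcases t.eq_empty_or_nonempty with rfl | hne
    · refine ⟨x, by simp, ?_⟩
      intro a ha
      simp only [Finset.mem_insert, Finset.notMem_empty, or_false] at ha
      subst ha
      rcases htot a (by simp) a (by simp) with h | h <;> exact h
    · obtain ⟨m, hm, hmax⟩ := ih hne (fun a ha b hb =>
        htot a (by simp [ha]) b (by simp [hb]))
      rcases htot x (by simp) m (by simp [hm]) with h | h
      · refine ⟨m, by simp [hm], fun a ha => ?_⟩
        rcases Finset.mem_insert.1 ha with rfl | ha
        · exact h
        · exact hmax a ha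
      · refine ⟨x, by simp, fun a ha => ?_⟩
        rcases Finset.mem_insert.1 ha with rfl | ha
        · rcases htot a (by simp) a (by simp) with h' | h' <;> exact h'
        · exact htrans a m x (hmax a ha) h

/-! ### Basic lemmas on planar rooted trees -/

variable {T : PRTree}

lemma PRTree.dfle_root (T : PRTree) (x : T.V) : T.dfle T.root x :=
  T.dfle_of_le x T.root (T.le_root x)

lemma PRTree.eq_root_of_dfle_root {x : T.V} (h : T.dfle x T.root) : x = T.root :=
  T.dfle_antisymm _ _ h (PRTree.dfle_root T x)

/-- A child of the root: a non-root vertex with no non-root vertex strictly above it. -/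
def IsChild (T : PRTree) (c : T.V) : Prop :=
  c ≠ T.root ∧ ∀ w, T.le c w → w ≠ T.root → w = c

lemma child_incomp {c c' : T.V} (hc : IsChild T c) (hc' : IsChild T c')
    (h : T.le c c') : c = c' :=
  (hc.2 c' h hc'.1).symm

lemma exists_child {x : T.V} (hx : x ≠ T.root) :
    ∃ c, IsChild T c ∧ T.le x c := by
  haveI := T.finite
  have hfin : Set.Finite {w : T.V | T.le x w ∧ w ≠ T.root} := Set.toFinite _
  have hxS : x ∈ hfin.toFinset := by
    rw [Set.Finite.mem_toFinset]; exact ⟨T.le_refl x, hx⟩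
  obtain ⟨m, hm, hmax⟩ := finset_max_of_total T.le T.le_trans hfin.toFinset ⟨x, hxS⟩
    (by
      intro a ha b hb
      rw [Set.Finite.mem_toFinset] at ha hb
      exact T.up_total x a b ha.1 hb.1)
  rw [Set.Finite.mem_toFinset] at hm
  refine ⟨m, ⟨hm.2, ?_⟩, hm.1⟩
  intro w hw hwroot
  have hwS : w ∈ hfin.toFinset := by
    rw [Set.Finite.mem_toFinset]; exact ⟨T.le_trans _ _ _ hm.1 hw, hwroot⟩
  exact T.le_antisymm _ _ (hmax w hwS) hw

lemma child_eq {x c c' : T.V} (hc : IsChild T c) (hc' : IsChild T c')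
    (h1 : T.le x c) (h2 : T.le x c') : c = c' := by
  rcases T.up_total x c c' h1 h2 with h | h
  · exact child_incomp hc hc' h
  · exact (child_incomp hc' hc h).symm

/-- The child of the root above a given vertex. -/
def _root_.PRTree.childOf (T : PRTree) (x : T.V) : T.V :=
  letI : Decidable (x = T.root) := Classical.dec _
  if h : x = T.root then x else Classical.choose (exists_child h)

lemma childOf_isChild {x : T.V} (hx : x ≠ T.root) : IsChild T (T.childOf x) := by
  letI : Decidable (x = T.root) := Classical.dec _
  rw [PRTree.childOf, dif_neg hx]
  exact (Classical.choose_spec (exists_child hx)).1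

lemma le_childOf {x : T.V} (hx : x ≠ T.root) : T.le x (T.childOf x) := by
  letI : Decidable (x = T.root) := Classical.dec _
  rw [PRTree.childOf, dif_neg hx]
  exact (Classical.choose_spec (exists_child hx)).2

/-- Separation: distinct children in depth-first order separate their subtrees
in the depth-first order. -/
lemma dfle_sep {c c' x y : T.V} (hc : IsChild T c) (hc' : IsChild T c')
    (hne : c ≠ c') (hdf : T.dfle c c') (hx : T.le x c) (hy : T.le y c') :
    T.dfle x y ∧ x ≠ y := by
  constructor
  · rcases T.dfle_total x y with h | h
    · exact h
    · exfalso
      have h1 : T.dfle c y := T.dfle_trans _ _ _ hdf (T.dfle_of_le y c' hy)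
      have h2 : T.le y c := T.downset_interval c c y x (T.le_refl c) hx h1 h
      exact hne (child_eq hc hc' h2 hy)
  · rintro rfl
    exact hne (child_eq hc hc' hx hy)

/-! ### Labelled planar rooted trees and embeddings -/

/-- A planar rooted tree with a (propositional) labelling of its vertices. -/
structure LT : Type 1 where
  T : PRTree
  lab : T.V → Prop

/-- Embedding of labelled planar trees: an injective map preserving and
reflecting the tree order, preserving the depth-first order and labels
(but not necessarily the root). -/
def Emb (A B : LT) : Prop :=
  ∃ f : A.T.V → B.T.V, Function.Injective f ∧
    (∀ v w, A.T.le v w ↔ B.T.le (f v) (f w)) ∧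
    (∀ v w, A.T.dfle v w → B.T.dfle (f v) (f w)) ∧
    (∀ v, A.lab v → B.lab (f v))

lemma Emb.rfl (A : LT) : Emb A A :=
  ⟨fun v => v, fun _ _ h => h, fun _ _ => Iff.rfl, fun _ _ h => h, fun _ h => h⟩

lemma Emb.trans {A B C : LT} (h1 : Emb A B) (h2 : Emb B C) : Emb A C := by
  obtain ⟨f, hf1, hf2, hf3, hf4⟩ := h1
  obtain ⟨g, hg1, hg2, hg3, hg4⟩ := h2
  exact ⟨fun v => g (f v), fun _ _ h => hf1 (hg1 h),
    fun v w => (hf2 v w).trans (hg2 _ _),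
    fun v w h => hg3 _ _ (hf3 _ _ h), fun v h => hg4 _ (hf4 _ h)⟩

instance : IsRefl LT Emb := ⟨Emb.rfl⟩

instance : IsTrans LT Emb := ⟨fun _ _ _ => Emb.trans⟩

instance : IsPreorder LT Emb where
  refl := Emb.rfl
  trans := fun _ _ _ => Emb.trans

/-- The subtree of a planar rooted tree below a vertex. -/
def subPR (T : PRTree) (c : T.V) : PRTree where
  V := {x : T.V // T.le x c}
  finite := by haveI := T.finite; exact inferInstance
  le x y := T.le x.1 y.1
  le_refl x := T.le_refl x.1
  le_antisymm x y h1 h2 := Subtype.ext (T.le_antisymm _ _ h1 h2)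
  le_trans x y z := T.le_trans _ _ _
  root := ⟨c, T.le_refl c⟩
  le_root x := x.2
  up_total x y z := T.up_total _ _ _
  dfle x y := T.dfle x.1 y.1
  dfle_refl x := T.dfle_refl x.1
  dfle_antisymm x y h1 h2 := Subtype.ext (T.dfle_antisymm _ _ h1 h2)
  dfle_trans x y z := T.dfle_trans _ _ _
  dfle_total x y := T.dfle_total _ _
  dfle_of_le x y := T.dfle_of_le _ _
  downset_interval u a b c2 := T.downset_interval u.1 a.1 b.1 c2.1

/-- The labelled subtree below a vertex. -/
def sub (A : LT) (c : A.T.V) : LT :=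
  ⟨subPR A.T c, fun x => A.lab x.1⟩

lemma emb_sub (A : LT) (c : A.T.V) : Emb (sub A c) A :=
  ⟨Subtype.val, Subtype.val_injective, fun _ _ => Iff.rfl,
    fun _ _ h => h, fun _ h => h⟩

/-- Size of a labelled tree. -/
def sz (A : LT) : ℕ := Nat.card A.T.V

lemma sz_sub_lt (A : LT) {c : A.T.V} (hc : IsChild A.T c) : sz (sub A c) < sz A := by
  classical
  haveI := A.T.finite
  haveI : Fintype A.T.V := Fintype.ofFinite _
  have hroot : ¬ A.T.le A.T.root c := fun h =>
    hc.1 (A.T.le_antisymm _ _ (A.T.le_root c) h)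
  have : sz (sub A c) = Fintype.card {x : A.T.V // A.T.le x c} := by
    simp [sz, sub, subPR, Nat.card_eq_fintype_card]
  rw [this, sz, Nat.card_eq_fintype_card]
  exact Fintype.card_subtype_lt hroot

/-- The list of children of the root, in depth-first order. -/
def childrenL (T : PRTree) : List T.V :=
  haveI := T.finite
  letI : DecidableRel T.dfle := Classical.decRel _
  haveI : IsTrans T.V T.dfle := ⟨T.dfle_trans⟩
  haveI : IsAntisymm T.V T.dfle := ⟨T.dfle_antisymm⟩
  haveI : IsTotal T.V T.dfle := ⟨T.dfle_total⟩
  Finset.sort (Set.toFinite {c | IsChild T c}).toFinset T.dfle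

lemma mem_childrenL {c : T.V} : c ∈ childrenL T ↔ IsChild T c := by
  haveI := T.finite
  letI : DecidableRel T.dfle := Classical.decRel _
  haveI : IsTrans T.V T.dfle := ⟨T.dfle_trans⟩
  haveI : IsAntisymm T.V T.dfle := ⟨T.dfle_antisymm⟩
  haveI : IsTotal T.V T.dfle := ⟨T.dfle_total⟩
  rw [childrenL, Finset.mem_sort, Set.Finite.mem_toFinset]
  rfl

lemma childrenL_pairwise (T : PRTree) :
    (childrenL T).Pairwise (fun a b => T.dfle a b ∧ a ≠ b) := by
  haveI := T.finite
  letI : DecidableRel T.dfle := Classical.decRel _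
  haveI : IsTrans T.V T.dfle := ⟨T.dfle_trans⟩
  haveI : IsAntisymm T.V T.dfle := ⟨T.dfle_antisymm⟩
  haveI : IsTotal T.V T.dfle := ⟨T.dfle_total⟩
  exact (Finset.pairwise_sort (r := T.dfle) (s := _)).and (Finset.sort_nodup (r := T.dfle) (s := _))

/-- The list of labelled subtrees at the children of the root, in depth-first
order. -/
def childLTs (A : LT) : List LT := (childrenL A.T).map (sub A)

lemma mem_childLTs {A C : LT} :
    C ∈ childLTs A ↔ ∃ c, IsChild A.T c ∧ C = sub A c := by
  simp only [childLTs, List.mem_map, mem_childrenL]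
  constructor
  · rintro ⟨c, h1, rfl⟩; exact ⟨c, h1, rfl⟩
  · rintro ⟨c, h1, rfl⟩; exact ⟨c, h1, rfl⟩

/-! ### Gluing embeddings of subtrees -/

lemma glue {A B : LT}
    (hlab : A.lab A.T.root → B.lab B.T.root)
    (d : A.T.V → B.T.V)
    (hd_child : ∀ c, IsChild A.T c → IsChild B.T (d c))
    (hd_mono : ∀ c c', IsChild A.T c → IsChild A.T c' → c ≠ c' → A.T.dfle c c' →
        B.T.dfle (d c) (d c') ∧ d c ≠ d c')
    (hemb : ∀ c, IsChild A.T c → Emb (sub A c) (sub B (d c))) :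
    ∃ f : PTHom A.T B.T, ∀ v, A.lab v → B.lab (f.toFun v) := by
  classical
  choose gf hinj hle hdf hlb using hemb
  -- the glued map
  set F : A.T.V → B.T.V := fun x =>
    if h : x = A.T.root then B.T.root
    else (gf (A.T.childOf x) (childOf_isChild h) ⟨x, le_childOf h⟩).1 with hF
  -- injectivity of d on children
  have hdinj : ∀ c c', IsChild A.T c → IsChild A.T c' → d c = d c' → c = c' := by
    intro c c' hc hc' h
    by_contra hne
    rcases A.T.dfle_total c c' with hd | hd
    · exact (hd_mono c c' hc hc' hne hd).2 h
    · exact (hd_mono c' c hc' hc (Ne.symm hne) hd).2 h.symm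
  -- unfolding lemma for F
  have Fspec : ∀ (x : A.T.V) (h : x ≠ A.T.root) (c : A.T.V) (hc : IsChild A.T c)
      (hxc : A.T.le x c), F x = (gf c hc ⟨x, hxc⟩).1 := by
    intro x h c hc hxc
    have hceq : c = A.T.childOf x := child_eq hc (childOf_isChild h) hxc (le_childOf h)
    subst hceq
    rw [hF]
    simp only [dif_neg h]
  -- basic facts about F
  have F1 : ∀ (x : A.T.V) (h : x ≠ A.T.root),
      B.T.le (F x) (d (A.T.childOf x)) ∧ F x ≠ B.T.root := by
    intro x h
    have hle1 : B.T.le (F x) (d (A.T.childOf x)) := by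
      rw [Fspec x h (A.T.childOf x) (childOf_isChild h) (le_childOf h)]
      exact (gf (A.T.childOf x) (childOf_isChild h) ⟨x, le_childOf h⟩).2
    refine ⟨hle1, fun hr => ?_⟩
    rw [hr] at hle1
    exact (hd_child _ (childOf_isChild h)).1
      (B.T.le_antisymm _ _ (B.T.le_root _) hle1)
  have Froot : F A.T.root = B.T.root := by rw [hF]; simp
  -- reflecting the order
  have Frefl : ∀ x y, B.T.le (F x) (F y) → A.T.le x y := by
    intro x y h
    by_cases hy : y = A.T.root
    · rw [hy]; exact A.T.le_root x
    by_cases hx : x = A.T.root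
    · exfalso
      rw [hx, Froot] at h
      exact (F1 y hy).2 (B.T.le_antisymm _ _ h (B.T.le_root _)).symm
    -- both non-root
    have hdx := (F1 x hx).1
    have hdy := (F1 y hy).1
    have hchx := childOf_isChild (T := A.T) hx
    have hchy := childOf_isChild (T := A.T) hy
    have hdd : d (A.T.childOf x) = d (A.T.childOf y) := by
      rcases B.T.up_total (F x) (F y) (d (A.T.childOf x)) h hdx with h1 | h1
      · rcases B.T.up_total (F y) (d (A.T.childOf x)) (d (A.T.childOf y)) h1 hdy with h2 | h2
        · exact child_incomp (hd_child _ hchx) (hd_child _ hchy) h2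
        · exact (child_incomp (hd_child _ hchy) (hd_child _ hchx) h2).symm
      · have h2 : B.T.le (d (A.T.childOf x)) (d (A.T.childOf y)) :=
          B.T.le_trans _ _ _ h1 hdy
        exact child_incomp (hd_child _ hchx) (hd_child _ hchy) h2
    have hcc : A.T.childOf x = A.T.childOf y := hdinj _ _ hchx hchy hdd
    have hyc : A.T.le y (A.T.childOf x) := by rw [hcc]; exact le_childOf hy
    have hx' := Fspec x hx (A.T.childOf x) hchx (le_childOf hx)
    have hy' := Fspec y hy (A.T.childOf x) hchx hyc
    rw [hx', hy'] at h
    exact (hle (A.T.childOf x) hchx ⟨x, le_childOf hx⟩ ⟨y, hyc⟩).2 h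
  -- preserving the order
  have Fle : ∀ x y, A.T.le x y → B.T.le (F x) (F y) := by
    intro x y h
    by_cases hy : y = A.T.root
    · rw [hy, Froot]; exact B.T.le_root _
    have hx : x ≠ A.T.root := by
      rintro rfl
      exact hy (A.T.le_antisymm _ _ (A.T.le_root _) h)
    have hchy := childOf_isChild (T := A.T) hy
    have hxc : A.T.le x (A.T.childOf y) := A.T.le_trans _ _ _ h (le_childOf hy)
    rw [Fspec x hx (A.T.childOf y) hchy hxc,
      Fspec y hy (A.T.childOf y) hchy (le_childOf hy)]
    exact (hle (A.T.childOf y) hchy ⟨x, hxc⟩ ⟨y, le_childOf hy⟩).1 h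
  -- preserving the depth-first order
  have Fdfle : ∀ x y, A.T.dfle x y → B.T.dfle (F x) (F y) := by
    intro x y h
    by_cases hx : x = A.T.root
    · rw [hx, Froot]; exact PRTree.dfle_root B.T _
    by_cases hy : y = A.T.root
    · exact absurd (hy ▸ h : A.T.dfle x A.T.root) (fun hh => hx (PRTree.eq_root_of_dfle_root hh))
    have hchx := childOf_isChild (T := A.T) hx
    have hchy := childOf_isChild (T := A.T) hy
    by_cases hcc : A.T.childOf x = A.T.childOf y
    · have hyc : A.T.le y (A.T.childOf x) := by rw [hcc]; exact le_childOf hy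
      rw [Fspec x hx (A.T.childOf x) hchx (le_childOf hx),
        Fspec y hy (A.T.childOf x) hchx hyc]
      exact hdf (A.T.childOf x) hchx ⟨x, le_childOf hx⟩ ⟨y, hyc⟩ h
    · have hcdf : A.T.dfle (A.T.childOf x) (A.T.childOf y) := by
        rcases A.T.dfle_total (A.T.childOf x) (A.T.childOf y) with h1 | h1
        · exact h1
        · exfalso
          obtain ⟨h2, h3⟩ := dfle_sep hchy hchx (Ne.symm hcc) h1 (le_childOf hy) (le_childOf hx)
          exact h3 (A.T.dfle_antisymm _ _ h2 h)
      obtain ⟨h4, h5⟩ := hd_mono _ _ hchx hchy hcc hcdf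
      exact (dfle_sep (hd_child _ hchx) (hd_child _ hchy) h5 h4
        (F1 x hx).1 (F1 y hy).1).1
  refine ⟨⟨F, ?_, Fle, Frefl, Froot, Fdfle⟩, ?_⟩
  · intro x y h
    exact A.T.le_antisymm x y (Frefl x y (h ▸ B.T.le_refl _)) (Frefl y x (h ▸ B.T.le_refl _))
  · intro x hx
    by_cases h : x = A.T.root
    · subst h
      show B.lab (F A.T.root)
      rw [Froot]; exact hlab hx
    · show B.lab (F x)
      rw [Fspec x h (A.T.childOf x) (childOf_isChild h) (le_childOf h)]
      exact hlb (A.T.childOf x) (childOf_isChild h) ⟨x, le_childOf h⟩ hx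

/-- Extract a monotone matching function from `Forall₂` against a sublist. -/
lemma forall₂_mono_fun {α : Type u_1} {β : Type u_2} [Nonempty β] {r : α → β → Prop}
    {p : α → α → Prop} {q : β → β → Prop}
    (hp : ∀ a b, p a b → p b a → False) :
    ∀ {l₁ : List α} {l₂ : List β}, List.Forall₂ r l₁ l₂ → l₁.Pairwise p → l₂.Pairwise q →
    ∃ dfun : α → β, (∀ c ∈ l₁, r c (dfun c) ∧ dfun c ∈ l₂) ∧
      (∀ c c', c ∈ l₁ → c' ∈ l₁ → p c c' → q (dfun c) (dfun c')) := by
  intro l₁ l₂ hf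
  induction hf with
  | nil =>
    intro _ _
    exact ⟨fun _ => Classical.arbitrary β, by simp, by simp⟩
  | @cons a b l₁ l₂ hab htail ih =>
    intro hp₁ hq₂
    obtain ⟨df, h1, h2⟩ := ih (List.Pairwise.of_cons hp₁) (List.Pairwise.of_cons hq₂)
    classical
    have hpa : ∀ x ∈ l₁, p a x := (List.pairwise_cons.1 hp₁).1
    have hqb : ∀ y ∈ l₂, q b y := (List.pairwise_cons.1 hq₂).1
    have hanotin : a ∉ l₁ := fun hmem => hp a a (hpa a hmem) (hpa a hmem)
    refine ⟨fun c => if c = a then b else df c, ?_, ?_⟩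
    · intro c hc
      dsimp only
      rcases List.mem_cons.1 hc with hceq | hc2
      · rw [if_pos hceq, hceq]
        exact ⟨hab, List.mem_cons_self⟩
      · have hca : c ≠ a := fun h => hanotin (h ▸ hc2)
        rw [if_neg hca]
        exact ⟨(h1 c hc2).1, List.mem_cons_of_mem _ (h1 c hc2).2⟩
    · intro c c' hc hc' hpcc
      dsimp only
      rcases List.mem_cons.1 hc with hceq | hc2
      · rcases List.mem_cons.1 hc' with hceq' | hc2'
        · rw [hceq, hceq'] at hpcc
          exact absurd hpcc (fun h => hp _ _ h h)
        · have hc'a : c' ≠ a := fun h => hanotin (h ▸ hc2')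
          rw [if_pos hceq, if_neg hc'a]
          exact hqb (df c') (h1 c' hc2').2
      · have hca : c ≠ a := fun h => hanotin (h ▸ hc2)
        rcases List.mem_cons.1 hc' with hceq' | hc2'
        · rw [hceq'] at hpcc
          exact absurd (hpa c hc2) (fun h => hp _ _ hpcc h)
        · have hc'a : c' ≠ a := fun h => hanotin (h ▸ hc2')
          rw [if_neg hca, if_neg hc'a]
          exact h2 c c' hc2 hc2' hpcc

/-- From a Higman-style relation between the children lists, glue a
root-preserving embedding. -/
lemma glue_of_sublist {A B : LT} (hlab : A.lab A.T.root → B.lab B.T.root)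
    (h : List.SublistForall₂ Emb (childLTs A) (childLTs B)) :
    ∃ f : PTHom A.T B.T, ∀ v, A.lab v → B.lab (f.toFun v) := by
  rw [List.sublistForall₂_iff] at h
  obtain ⟨l, hforall, hsub⟩ := h
  rw [childLTs] at hsub
  obtain ⟨l', hsub', rfl⟩ := List.sublist_map_iff.1 hsub
  rw [childLTs, List.forall₂_map_left_iff, List.forall₂_map_right_iff] at hforall
  haveI : Nonempty B.T.V := ⟨B.T.root⟩
  have pA := childrenL_pairwise A.T
  have pB : l'.Pairwise (fun a b => B.T.dfle a b ∧ a ≠ b) :=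
    (childrenL_pairwise B.T).sublist hsub'
  obtain ⟨dfun, hd1, hd2⟩ := forall₂_mono_fun
    (p := fun a b => A.T.dfle a b ∧ a ≠ b) (q := fun a b => B.T.dfle a b ∧ a ≠ b)
    (fun a b h1 h2 => h1.2 (A.T.dfle_antisymm _ _ h1.1 h2.1)) hforall pA pB
  have hmemA : ∀ c, IsChild A.T c → c ∈ childrenL A.T := fun c hc => mem_childrenL.2 hc
  refine glue hlab dfun ?_ ?_ ?_
  · intro c hc
    exact mem_childrenL.1 (hsub'.subset (hd1 c (hmemA c hc)).2)
  · intro c c' hc hc' hne hdf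
    exact hd2 c c' (hmemA c hc) (hmemA c' hc') ⟨hdf, hne⟩
  · intro c hc
    exact (hd1 c (hmemA c hc)).1

lemma prop_pair (P : ℕ → Prop) : ∃ a b : ℕ, a < b ∧ (P a → P b) := by
  by_cases h : P 1
  · exact ⟨0, 1, Nat.zero_lt_one, fun _ => h⟩
  · exact ⟨1, 2, Nat.one_lt_two, fun h1 => absurd h1 h⟩

/-- The main well-quasi-order theorem for labelled planar rooted trees, by
Nash-Williams' minimal bad sequence argument together with Higman's lemma. -/
theorem emb_pwo : (Set.univ : Set LT).PartiallyWellOrderedOn Emb := by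
  rw [Set.PartiallyWellOrderedOn.iff_not_exists_isMinBadSeq sz]
  rintro ⟨f, hf, hmin⟩
  have hs₀ : {C : LT | ∃ n, C ∈ childLTs (f n)}.PartiallyWellOrderedOn Emb := by
    rw [Set.PartiallyWellOrderedOn.iff_forall_not_isBadSeq]
    rintro g ⟨hg1, hg2⟩
    choose N hN using hg1
    obtain ⟨n₀, hn₀⟩ : ∃ n₀, ∀ n, N n₀ ≤ N n := by
      obtain ⟨n₀, hn₀⟩ : sInf (Set.range N) ∈ Set.range N :=
        Nat.sInf_mem ⟨N 0, ⟨0, rfl⟩⟩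
      exact ⟨n₀, fun n => hn₀ ▸ Nat.sInf_le ⟨n, rfl⟩⟩
    set h' : ℕ → LT := fun m => if m < N n₀ then f m else g (m - N n₀ + n₀) with hh'
    have hemb_g : ∀ k, Emb (g k) (f (N k)) := by
      intro k
      obtain ⟨c, hc, hceq⟩ := mem_childLTs.1 (hN k)
      rw [hceq]
      exact emb_sub _ _
    have hbad : Set.PartiallyWellOrderedOn.IsBadSeq Emb Set.univ h' := by
      refine ⟨fun n => trivial, ?_⟩
      intro i j hij hEmbij
      rw [hh'] at hEmbij
      dsimp only at hEmbij
      by_cases hj : j < N n₀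
      · rw [if_pos hj, if_pos (hij.trans hj)] at hEmbij
        exact hf.2 i j hij hEmbij
      · rw [if_neg hj] at hEmbij
        by_cases hi : i < N n₀
        · rw [if_pos hi] at hEmbij
          refine hf.2 i (N (j - N n₀ + n₀)) (lt_of_lt_of_le hi (hn₀ _)) ?_
          exact hEmbij.trans (hemb_g _)
        · rw [if_neg hi] at hEmbij
          refine hg2 (i - N n₀ + n₀) (j - N n₀ + n₀) ?_ hEmbij
          omega
    refine hmin (N n₀) h' (fun m hm => ?_) ?_ hbad
    · rw [hh']
      dsimp only
      rw [if_pos hm]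
    · rw [hh']
      dsimp only
      rw [if_neg (lt_irrefl _), Nat.sub_self, Nat.zero_add]
      obtain ⟨c, hc, hceq⟩ := mem_childLTs.1 (hN n₀)
      rw [hceq]
      exact sz_sub_lt _ hc
  have hlists := Set.PartiallyWellOrderedOn.partiallyWellOrderedOn_sublistForall₂ Emb hs₀
  haveI : IsPreorder (List LT) (List.SublistForall₂ Emb) :=
    { refl := Std.Refl.refl, trans := IsTrans.trans }
  obtain ⟨gm, hgm⟩ := hlists.exists_monotone_subseq (f := fun n => childLTs (f n))
    (fun n C hC => ⟨n, hC⟩)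
  obtain ⟨a, b, hab, himp⟩ := prop_pair (fun k => (f (gm k)).lab (f (gm k)).T.root)
  obtain ⟨F, hFlab⟩ := glue_of_sublist himp (hgm a b hab.le)
  exact hf.2 (gm a) (gm b) (gm.strictMono hab)
    ⟨F.toFun, F.inj, fun x y => ⟨F.map_le x y, F.reflect_le x y⟩, F.map_dfle, hFlab⟩

/-- A strictly monotone self-map of `Fin n` is the identity. -/
lemma fin_id_of_strictMono {n : ℕ} (σ : Fin n → Fin n) (h : StrictMono σ) (k : Fin n) :
    σ k = k := by
  have hle : ∀ (τ : Fin n → Fin n), StrictMono τ → ∀ k : Fin n, (k : ℕ) ≤ τ k := by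
    intro τ hτ
    have key : ∀ m : ℕ, ∀ k : Fin n, (k : ℕ) = m → m ≤ τ k := by
      intro m
      induction m with
      | zero => exact fun k _ => Nat.zero_le _
      | succ m ih =>
        intro k hk
        have hklt := k.isLt
        have hm : m < n := by omega
        have h1 := ih ⟨m, hm⟩ rfl
        have h2 : τ ⟨m, hm⟩ < τ k := hτ (by rw [Fin.lt_def]; simp; omega)
        rw [Fin.lt_def] at h2
        omega
    exact fun k => key (k : ℕ) k rfl
  have hinj : Function.Injective σ := h.injective
  have hsurj : Function.Surjective σ := Finite.injective_iff_surjective.mp hinj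
  choose ψ hψ using hsurj
  have hψσ : ∀ k, ψ (σ k) = k := fun k => hinj (hψ (σ k))
  have hψmono : StrictMono ψ := by
    intro x y hxy
    rcases lt_trichotomy (ψ x) (ψ y) with h1 | h1 | h1
    · exact h1
    · exfalso
      rw [← hψ x, ← hψ y, h1] at hxy
      exact lt_irrefl _ hxy
    · exfalso
      have h2 := h h1
      rw [hψ x, hψ y] at h2
      exact lt_irrefl _ (hxy.trans h2)
  have h1 := hle σ h k
  have h2 := hle ψ hψmono (σ k)
  rw [hψσ k] at h2
  exact Fin.ext (le_antisymm h2 h1)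


end RelKruskal

end RelKruskalAux

/-- Case `T = Bₙ` of the relative Kruskal theorem: for `n ≥ 1`, planar rooted
trees with `n` distinguished non-root vertices, pairwise incomparable in the
tree order and listed in increasing depth-first order, quasi-ordered by the
existence of a root- and depth-first-ordering-preserving order embedding
mapping distinguished vertices to distinguished vertices, form a
well-quasi-order. -/
theorem relative_kruskal_Bn (n : ℕ) (hn : 1 ≤ n) (U : ℕ → PRTree)
    (v : ∀ m, Fin n → (U m).V)
    (hroot : ∀ m i, v m i ≠ (U m).root)
    (hincomp : ∀ m (i j : Fin n), i ≠ j → ¬ (U m).le (v m i) (v m j))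
    (hmono : ∀ m (i j : Fin n), i < j → (U m).dfle (v m i) (v m j) ∧ v m i ≠ v m j) :
    ∃ i j, i < j ∧ ∃ f : PTHom (U i) (U j), ∀ k, f.toFun (v i k) = v j k := by
  classical
  have hlists := Set.PartiallyWellOrderedOn.partiallyWellOrderedOn_sublistForall₂
    RelKruskal.Emb RelKruskal.emb_pwo
  obtain ⟨i, j, hij, hsl⟩ := hlists
    (fun m => ⟨RelKruskal.childLTs ⟨U m, fun x => ∃ k, v m k = x⟩,
    (fun x _ => Set.mem_univ x)⟩)
  obtain ⟨F, hFlab⟩ := RelKruskal.glue_of_sublist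
    (A := ⟨U i, fun x => ∃ k, v i k = x⟩) (B := ⟨U j, fun x => ∃ k, v j k = x⟩)
    (by rintro ⟨k, hk⟩; exact absurd hk (hroot i k)) hsl
  refine ⟨i, j, hij, F, ?_⟩
  have hσ : ∀ k, ∃ k', v j k' = F.toFun (v i k) := fun k => hFlab (v i k) ⟨k, rfl⟩
  choose σ hσ using hσ
  have hmonoσ : StrictMono σ := by
    intro k k' hkk
    obtain ⟨hdf, hne⟩ := hmono i k k' hkk
    have h1 : (U j).dfle (F.toFun (v i k)) (F.toFun (v i k')) := F.map_dfle _ _ hdf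
    have h2 : F.toFun (v i k) ≠ F.toFun (v i k') := fun h => hne (F.inj h)
    rw [← hσ k, ← hσ k'] at h1 h2
    rcases lt_trichotomy (σ k) (σ k') with h3 | h3 | h3
    · exact h3
    · exact absurd (congrArg (v j) h3) h2
    · obtain ⟨hdf', hne'⟩ := hmono j (σ k') (σ k) h3
      exact absurd ((U j).dfle_antisymm _ _ h1 hdf').symm hne'
  intro k
  have hk := hσ k
  rw [RelKruskal.fin_id_of_strictMono σ hmonoσ k] at hk
  exact hk.symm
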